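/- Let J ≥ 2, let u_0,…,u_J ∈ ℝ with u_0 = u_J = 0, let h_1,…,h_J be positive reals, let ẋ_0,…,ẋ_J ∈ ℝ with half-point speeds ẋ_{j+1/2} := (ẋ_j + ẋ_{j+1})/2 and spacing rates ḣ_j := ẋ_j − ẋ_{j−1}, let a_{j−1/2} ≥ 0 (j = 1,…,J), b_{j−1/2} ∈ ℝ (j = 1,…,J), and c_j ∈ ℝ (j = 1,…,J−1). Assume that c_j + (b_{j+1/2} − b_{j−1/2})/(h_{j+1}+h_j) ≥ 0 for j = 1,…,J−1. Define (Au)_j := a_{j+1/2}(u_{j+1}−u_j)/h_{j+1} − a_{j−1/2}(u_j−u_{j−1})/h_j − (ḣ_{j+1}+ḣ_j)u_j/2 − (h_{j+1}+h_j)c_j u_j/2 − (b_{j+1/2}−ẋ_{j+1/2})(u_{j+1}+u_j)/2 + (b_{j−1/2}−ẋ_{j−1/2})(u_j+u_{j−1})/2 for j = 1,…,J−1. Then ∑_{j=1}^{J−1} u_j (Au)_j + ∑_{j=1}^{J−1} (ḣ_{j+1}+ḣ_j)u_j²/4 ≤ 0. -/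
import Mathlib

lemma tele_sum_aux (g : ℕ → ℝ) (N : ℕ) :
    ∑ j ∈ Finset.Icc 1 N, (g (j + 1) - g j) = g (N + 1) - g 1 := by
  induction N with
  | zero => simp
  | succ n ih =>
    rw [Finset.sum_Icc_succ_top (by omega), ih]
    ring

/-- Core of Theorem 3.1 of the paper: under the discrete coefficient condition
`c_j + (b_{j+1/2} - b_{j-1/2})/(h_{j+1}+h_j) ≥ 0`, nonnegative diffusion coefficients
`a_{j-1/2} ≥ 0`, and positive spacings `h_j > 0`, the conservative central finite
difference scheme on a moving mesh satisfies `uᵀ(A + √M d√M/dt)u ≤ 0`, i.e.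
`∑ u_j (Au)_j + ∑ (ḣ_{j+1}+ḣ_j) u_j²/4 ≤ 0`, where `ḣ_j = ẋ_j - ẋ_{j-1}` and
half-point speeds are `ẋ_{j+1/2} = (ẋ_j + ẋ_{j+1})/2`. -/
theorem moving_mesh_negSemidef_conservative
    (J : ℕ) (hJ : 2 ≤ J)
    (u h xd a b c Au : ℕ → ℝ)
    (hu0 : u 0 = 0) (huJ : u J = 0)
    (hh : ∀ j ∈ Finset.Icc 1 J, 0 < h j)
    (ha : ∀ j ∈ Finset.Icc 1 J, 0 ≤ a j)
    (hcoef : ∀ j ∈ Finset.Icc 1 (J - 1),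
      0 ≤ c j + (b (j + 1) - b j) / (h (j + 1) + h j))
    (hAu : ∀ j ∈ Finset.Icc 1 (J - 1), Au j =
      a (j + 1) * (u (j + 1) - u j) / h (j + 1)
        - a j * (u j - u (j - 1)) / h j
        - ((xd (j + 1) - xd j) + (xd j - xd (j - 1))) * u j / 2
        - (h (j + 1) + h j) * c j * u j / 2
        - (b (j + 1) - (xd j + xd (j + 1)) / 2) * (u (j + 1) + u j) / 2
        + (b j - (xd (j - 1) + xd j) / 2) * (u j + u (j - 1)) / 2) :
    ∑ j ∈ Finset.Icc 1 (J - 1), u j * Au j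
      + ∑ j ∈ Finset.Icc 1 (J - 1),
          ((xd (j + 1) - xd j) + (xd j - xd (j - 1))) * u j ^ 2 / 4
    ≤ 0 := by
  have hJJ : J - 1 + 1 = J := by omega
  set G : ℕ → ℝ := fun j => a j * u j * (u j - u (j - 1)) / h j with hG
  set F : ℕ → ℝ := fun j => (b j - (xd (j - 1) + xd j) / 2) * u j * u (j - 1) / 2 with hF
  set P : ℕ → ℝ := fun j => a (j + 1) * (u (j + 1) - u j) ^ 2 / h (j + 1) with hP
  set Q : ℕ → ℝ := fun j =>
    (h (j + 1) + h j) * c j * u j ^ 2 / 2 + (b (j + 1) - b j) * u j ^ 2 / 2 with hQ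
  have key : ∀ j ∈ Finset.Icc 1 (J - 1),
      u j * Au j + ((xd (j + 1) - xd j) + (xd j - xd (j - 1))) * u j ^ 2 / 4
      = (G (j + 1) - G j) - (F (j + 1) - F j) - P j - Q j := by
    intro j hj
    have h1 : 1 ≤ j := (Finset.mem_Icc.mp hj).1
    rw [hAu j hj]
    simp only [hG, hF, hP, hQ]
    rw [show j + 1 - 1 = j from by omega]
    ring
  rw [← Finset.sum_add_distrib, Finset.sum_congr rfl key]
  have expand : ∑ j ∈ Finset.Icc 1 (J - 1),
        ((G (j + 1) - G j) - (F (j + 1) - F j) - P j - Q j)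
      = (∑ j ∈ Finset.Icc 1 (J - 1), (G (j + 1) - G j))
        - (∑ j ∈ Finset.Icc 1 (J - 1), (F (j + 1) - F j))
        - ∑ j ∈ Finset.Icc 1 (J - 1), P j - ∑ j ∈ Finset.Icc 1 (J - 1), Q j := by
    simp [Finset.sum_sub_distrib]
  rw [expand, tele_sum_aux, tele_sum_aux, hJJ]
  have hGJ : G J = 0 := by simp [hG, huJ]
  have hFJ : F J = 0 := by simp [hF, huJ]
  have hF1 : F 1 = 0 := by simp [hF, hu0]
  have hG1 : 0 ≤ G 1 := by
    have h1 : (1 : ℕ) ∈ Finset.Icc 1 J := by simp; omega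
    simp only [hG, hu0, sub_zero]
    have : 0 ≤ a 1 * u 1 * u 1 := by
      rw [mul_assoc]
      exact mul_nonneg (ha 1 h1) (mul_self_nonneg _)
    exact div_nonneg this (hh 1 h1).le
  have hPsum : 0 ≤ ∑ j ∈ Finset.Icc 1 (J - 1), P j := by
    apply Finset.sum_nonneg
    intro j hj
    have hj' := Finset.mem_Icc.mp hj
    have hmem : j + 1 ∈ Finset.Icc 1 J := by simp; omega
    exact div_nonneg (mul_nonneg (ha _ hmem) (sq_nonneg _)) (hh _ hmem).le
  have hQsum : 0 ≤ ∑ j ∈ Finset.Icc 1 (J - 1), Q j := by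
    apply Finset.sum_nonneg
    intro j hj
    have hj' := Finset.mem_Icc.mp hj
    have hm1 : j ∈ Finset.Icc 1 J := by simp; omega
    have hm2 : j + 1 ∈ Finset.Icc 1 J := by simp; omega
    have hS : 0 < h (j + 1) + h j := by linarith [hh j hm1, hh (j + 1) hm2]
    have hQeq : Q j = (c j + (b (j + 1) - b j) / (h (j + 1) + h j))
        * ((h (j + 1) + h j) * u j ^ 2 / 2) := by
      simp only [hQ]
      field_simp
    rw [hQeq]
    exact mul_nonneg (hcoef j hj)
      (by positivity)
  rw [hGJ, hFJ, hF1]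
  linarith
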